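/- In R = k[y_12, y_13, y_14, y_15, y_23, y_24, y_25, y_34, y_35, y_45, y_1234, y_1235, y_1245, y_1345, y_2345], the two quadrics q1 = -y_1234·y_15 + y_1235·y_14 - y_1245·y_13 + y_1345·y_12 and q2 = -y_1234·y_25 + y_1235·y_24 - y_1245·y_23 + y_2345·y_12 form a regular sequence. -/

import Mathlib

/-!
Viewed as a polynomial in `y₁₂`, `q₁ = y₁₃₄₅ · y₁₂ + (-y₁₂₃₄y₁₅ + y₁₂₃₅y₁₄ - y₁₂₄₅y₁₃)` is linear
with prime leading coefficient `y₁₃₄₅` not dividing the constant term, so `q₁` is irreducible, hence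
prime in the factorial ring `R`. Then `q₂` is a nonzerodivisor modulo `q₁` as soon as `q₁ ∤ q₂`,
which an evaluation at a point where `q₁` vanishes and `q₂` does not shows. Finally `(q₁, q₂)` is
proper because both quadrics have zero constant term.
-/

open RingTheory Sequence in
theorem RingTheory.Sequence.isRegular_pair_of_prime {R : Type*} [CommRing R] [IsDomain R]
    {p q : R} (hp : Prime p) (hpq : ¬ p ∣ q) (hne : Ideal.span {p, q} ≠ ⊤) :
    IsRegular R [p, q] := by
  rw [isRegular_iff, isWeaklyRegular_cons_iff, isWeaklyRegular_singleton_iff,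
    isSMulRegular_quotient_iff_mem_of_smul_mem, ← Submodule.ideal_span_singleton_smul,
    Ideal.smul_eq_mul, Ideal.mul_top]
  refine ⟨⟨.of_ne_zero hp.ne_zero, fun x hx => ?_⟩, ?_⟩
  · rw [Ideal.mem_span_singleton] at hx ⊢
    exact (hp.dvd_mul.mp hx).resolve_left hpq
  · simpa [Ideal.span_insert, Ideal.smul_eq_mul, eq_comm] using hne

theorem MvPolynomial.prime_of_finSuccEquiv_eq_C_mul_X_add_C {R : Type*} [CommRing R]
    [IsDomain R] [UniqueFactorizationMonoid R] {n : ℕ} {p : MvPolynomial (Fin (n + 1)) R}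
    {a b : MvPolynomial (Fin n) R} (hp : finSuccEquiv R n p = .C a * .X + .C b)
    (ha : Prime a) (hab : ¬ a ∣ b) : Prime p := by
  rw [← UniqueFactorizationMonoid.irreducible_iff_prime,
    ← MulEquiv.irreducible_iff (finSuccEquiv R n), hp]
  exact Polynomial.irreducible_C_mul_X_add_C ha.ne_zero
    (ha.irreducible.isRelPrime_iff_not_dvd.mpr hab)

open MvPolynomial RingTheory in
/-- `X 0 = y₁₂, X 1 = y₁₃, X 2 = y₁₄, X 3 = y₁₅, X 4 = y₂₃, X 5 = y₂₄, X 6 = y₂₅, X 7 = y₃₄,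
X 8 = y₃₅, X 9 = y₄₅, X 10 = y₁₂₃₄, X 11 = y₁₂₃₅, X 12 = y₁₂₄₅, X 13 = y₁₃₄₅, X 14 = y₂₃₄₅`. -/
theorem stmt8 (k : Type*) [Field k]
    (q1 q2 : MvPolynomial (Fin 15) k)
    (h1 : q1 = -(X 10 * X 3) + X 11 * X 2 - X 12 * X 1 + X 13 * X 0)
    (h2 : q2 = -(X 10 * X 6) + X 11 * X 5 - X 12 * X 4 + X 14 * X 0) :
    Sequence.IsRegular (MvPolynomial (Fin 15) k) [q1, q2] := by
  have hq1_linear : finSuccEquiv k 14 q1 =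
      .C (X 12) * .X + .C (-(X 9 * X 2) + X 10 * X 1 - X 11 * X 0) := by
    rw [h1]
    -- `finSuccEquiv` makes `X 0` the polynomial variable and renames `X (Fin.succ j)` to `X j`.
    change finSuccEquiv k 14 (-(X (Fin.succ 9) * X (Fin.succ 2)) + X (Fin.succ 10) * X (Fin.succ 1)
      - X (Fin.succ 11) * X (Fin.succ 0) + X (Fin.succ 12) * X 0) = _
    simp only [map_add, map_sub, map_neg, map_mul, finSuccEquiv_X_zero, finSuccEquiv_X_succ]
    ring
  have hq1 : Prime q1 := prime_of_finSuccEquiv_eq_C_mul_X_add_C hq1_linear X_prime fun h => by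
    simpa using map_dvd (eval fun j => if j = 9 ∨ j = 2 then (1 : k) else 0) h
  have hq1q2 : ¬ q1 ∣ q2 := fun h => by
    simpa [h1, h2] using map_dvd (eval fun j => if j = 6 ∨ j = 10 then (1 : k) else 0) h
  have hproper : Ideal.span {q1, q2} ≠ ⊤ :=
    ne_top_of_le_ne_top (RingHom.ker_ne_top (constantCoeff (σ := Fin 15) (R := k))) <| by
      simp [Ideal.span_le, Set.insert_subset_iff, h1, h2]
  exact Sequence.isRegular_pair_of_prime hq1 hq1q2 hproper
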